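/- Let p be a prime, A a reduced commutative ring with p·1_A = 0, n ≥ 1, and let Σ denote either Σ_s (with p odd and 1 ≤ s ≤ (p−1)/2) or Σ_{1,t} (with t ≥ 1). Let m ≥ 1 and let X, X' ∈ Σ be such that X − X' lies entrywise in V^m. Then e₁(X) − e₁(X') and l₁(X) − l₁(X') lie entrywise in V^m, where e₁ and l₁ denote the V-adic limits of the exponential and logarithmic partial sums respectively. -/

import Mathlib

/-- The matrix of `j`-th Witt coordinates of a matrix of Witt vectors. -/
def wittPi (p : ℕ) {A : Type*} {n : ℕ} (j : ℕ)
    (X : Matrix (Fin n) (Fin n) (WittVector p A)) : Matrix (Fin n) (Fin n) A :=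
  X.map fun w => w.coeff j

/-- `Σ_s`: matrices of Witt vectors whose `0`-th Witt coordinate matrix is `s`-step nilpotent. -/
def SigmaS (p : ℕ) {A : Type*} [CommRing A] {n : ℕ} (s : ℕ) :
    Set (Matrix (Fin n) (Fin n) (WittVector p A)) :=
  {X | wittPi p 0 X ^ s = 0}

/-- `Σ_{1,t}`: matrices of Witt vectors whose `0`-th Witt coordinate matrix vanishes and whose
`1`-st Witt coordinate matrix is `t`-step nilpotent. -/
def SigmaOneT (p : ℕ) {A : Type*} [CommRing A] {n : ℕ} (t : ℕ) :
    Set (Matrix (Fin n) (Fin n) (WittVector p A)) :=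
  {X | wittPi p 0 X = 0 ∧ wittPi p 1 X ^ t = 0}

/-- The predicate "`S` is either `Σ_s` (with `p` odd and `1 ≤ s ≤ (p-1)/2`) or `Σ_{1,t}`
(with `t ≥ 1`)". -/
def IsSigmaEither (p : ℕ) {A : Type*} [CommRing A] {n : ℕ}
    (S : Set (Matrix (Fin n) (Fin n) (WittVector p A))) : Prop :=
  (∃ s : ℕ, Odd p ∧ 1 ≤ s ∧ s ≤ (p - 1) / 2 ∧ S = SigmaS p s) ∨
  (∃ t : ℕ, 1 ≤ t ∧ S = SigmaOneT p t)

/-- A matrix of Witt vectors lies entrywise in `V^d` if the `j`-th Witt coordinates of all its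
entries vanish for all `j < d`. -/
def EntrywiseV (p : ℕ) {A : Type*} [Zero A] {n : ℕ} (d : ℕ)
    (X : Matrix (Fin n) (Fin n) (WittVector p A)) : Prop :=
  ∀ j < d, wittPi p j X = 0

/-- V-adic convergence of a sequence of matrices of Witt vectors. -/
def TendstoV (p : ℕ) [Fact p.Prime] {A : Type*} [CommRing A] {n : ℕ}
    (Y : ℕ → Matrix (Fin n) (Fin n) (WittVector p A))
    (L : Matrix (Fin n) (Fin n) (WittVector p A)) : Prop :=
  ∀ d : ℕ, ∃ N₀ : ℕ, ∀ N ≥ N₀, EntrywiseV p d (Y N - L)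

/-- `E` is the sequence of exponential partial sums of `X`:
`N! • E N = ∑_{v=1}^{N} (N!/v!) • X^v` for all `N ≥ 1`. -/
def IsExpPartialSums (p : ℕ) [Fact p.Prime] {A : Type*} [CommRing A] {n : ℕ}
    (X : Matrix (Fin n) (Fin n) (WittVector p A))
    (E : ℕ → Matrix (Fin n) (Fin n) (WittVector p A)) : Prop :=
  ∀ N, 1 ≤ N → N.factorial • E N =
    ∑ v ∈ Finset.Icc 1 N, (N.factorial / v.factorial) • X ^ v

/-- `Lg` is the sequence of logarithmic partial sums of `X`:
`N! • Lg N = ∑_{v=1}^{N} (-1)^(v-1) • (N!/v) • X^v` for all `N ≥ 1`. -/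
def IsLogPartialSums (p : ℕ) [Fact p.Prime] {A : Type*} [CommRing A] {n : ℕ}
    (X : Matrix (Fin n) (Fin n) (WittVector p A))
    (Lg : ℕ → Matrix (Fin n) (Fin n) (WittVector p A)) : Prop :=
  ∀ N, 1 ≤ N → (N.factorial : ℤ) • Lg N =
    ∑ v ∈ Finset.Icc 1 N, ((-1 : ℤ) ^ (v - 1) * ((N.factorial / v : ℕ) : ℤ)) • X ^ v

/-- `L` is the V-adic limit of the exponential partial sums of `X`. -/
def IsExpLimit (p : ℕ) [Fact p.Prime] {A : Type*} [CommRing A] {n : ℕ}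
    (X L : Matrix (Fin n) (Fin n) (WittVector p A)) : Prop :=
  ∃ E : ℕ → Matrix (Fin n) (Fin n) (WittVector p A),
    IsExpPartialSums p X E ∧ TendstoV p E L

/-- `L` is the V-adic limit of the logarithmic partial sums of `X`. -/
def IsLogLimit (p : ℕ) [Fact p.Prime] {A : Type*} [CommRing A] {n : ℕ}
    (X L : Matrix (Fin n) (Fin n) (WittVector p A)) : Prop :=
  ∃ Lg : ℕ → Matrix (Fin n) (Fin n) (WittVector p A),
    IsLogPartialSums p X Lg ∧ TendstoV p Lg L

/-!
Write `W = W(A)` and `V^d W` for the Witt vectors whose first `d` coordinates vanish. Since `A` has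
characteristic `p`, `V a * V b = p * V (a * b)`, hence `V W * V^d W ⊆ p * V^d W` for `d ≥ 1`.
For `X ∈ Σ` the entries of `X ^ s` lie in `V W` (with `s = 1` on `Σ_{1,t}`), so expanding
`X ^ v - X' ^ v = ∑ X' ^ k * (X - X') * X ^ (v - 1 - k)` and using Legendre's bound
`(p - 1) * v_p(v!) < v` puts the entries of `X ^ v - X' ^ v` in `p ^ v_p(v!) * V^m W`.
The partial sums satisfy `(N+1)! * (E_{N+1} - E_N) = X ^ (N+1)` and
`(N+1)! * (L_{N+1} - L_N) = ± N! * X ^ (N+1)`. As `A` is reduced, `p` is a non-zero-divisor on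
`W`, and integers prime to `p` are units there, so dividing by `(N+1)!` keeps
`E_N - E'_N` and `L_N - L'_N` in `V^m`, and this passes to the `V`-adic limits.
-/

open scoped Nat

theorem pow_sub_pow_eq_sum {R : Type*} [Ring R] (x y : R) (v : ℕ) :
    x ^ v - y ^ v = ∑ k ∈ Finset.range v, y ^ k * (x - y) * x ^ (v - 1 - k) := by
  have telescope := Finset.sum_range_sub' (fun k => y ^ k * x ^ (v - k)) v
  simp only [pow_zero, one_mul, Nat.sub_zero, Nat.sub_self, mul_one] at telescope
  rw [← telescope]
  refine Finset.sum_congr rfl fun k hk => ?_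
  obtain ⟨l, rfl⟩ := Nat.exists_eq_add_of_lt (Finset.mem_range.mp hk)
  rw [show k + l + 1 - k = l + 1 by omega, show k + l + 1 - (k + 1) = l by omega,
    show k + l + 1 - 1 - k = l by omega, pow_succ' x, pow_succ y]
  noncomm_ring

theorem Ideal.pow_mul_le_pow_mul {R : Type*} [CommSemiring R] {I J K : Ideal R}
    (h : I * K ≤ J * K) (q : ℕ) : I ^ q * K ≤ J ^ q * K := by
  induction q with
  | zero => simp
  | succ q ih =>
    calc I ^ (q + 1) * K = I * (I ^ q * K) := by rw [pow_succ', mul_assoc]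
      _ ≤ I * (J ^ q * K) := Ideal.mul_mono_right ih
      _ = J ^ q * (I * K) := by rw [mul_left_comm]
      _ ≤ J ^ q * (J * K) := Ideal.mul_mono_right h
      _ = J ^ (q + 1) * K := by rw [pow_succ, mul_assoc]

theorem Nat.factorization_factorial_le_div_add_div {p s : ℕ} [Fact p.Prime] (hs : 0 < s)
    (hsp : s = 1 ∨ 2 * s ≤ p - 1) (i j : ℕ) :
    (i + j + 1)!.factorization p ≤ i / s + j / s := by
  have hLegendre := sub_one_mul_padicValNat_factorial_lt_of_ne_zero p (Nat.succ_ne_zero (i + j))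
  rw [← Nat.factorization_def _ Fact.out] at hLegendre
  set F := (i + j + 1)!.factorization p
  rcases hsp with rfl | hsp
  · have := Nat.le_mul_of_pos_left F (Nat.sub_pos_of_lt (Fact.out : p.Prime).one_lt)
    simp only [Nat.div_one]
    omega
  · by_contra! hF
    have := Nat.div_add_mod i s
    have := Nat.div_add_mod j s
    have := Nat.mod_lt i hs
    have := Nat.mod_lt j hs
    have : 2 * s * F ≤ (p - 1) * F := Nat.mul_le_mul_right F hsp
    have : s * (i / s + j / s + 1) ≤ s * F := Nat.mul_le_mul_left s hF
    have : s ≤ s * F := Nat.le_mul_of_pos_right s (Nat.zero_lt_of_lt hF)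
    nlinarith

namespace Matrix

variable {ι R : Type*} [Fintype ι] [CommRing R]

theorem mul_apply_mem_mul {I J : Ideal R} {M N : Matrix ι ι R} (hM : ∀ i j, M i j ∈ I)
    (hN : ∀ i j, N i j ∈ J) (i j : ι) : (M * N) i j ∈ I * J :=
  Ideal.sum_mem _ fun k _ => Ideal.mul_mem_mul (hM i k) (hN k j)

variable [DecidableEq ι]

theorem pow_apply_mem_pow {I : Ideal R} {M : Matrix ι ι R} (hM : ∀ i j, M i j ∈ I) (q : ℕ) :
    ∀ i j, (M ^ q) i j ∈ I ^ q := by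
  induction q with
  | zero => simp
  | succ q ih => rw [pow_succ, pow_succ]; exact mul_apply_mem_mul ih hM

theorem pow_apply_mem_pow_div {I : Ideal R} {M : Matrix ι ι R} {s : ℕ}
    (hM : ∀ i j, (M ^ s) i j ∈ I) (k : ℕ) (i j : ι) : (M ^ k) i j ∈ I ^ (k / s) := by
  have h := mul_apply_mem_mul (pow_apply_mem_pow hM (k / s)) (J := ⊤)
    (N := M ^ (k % s)) (fun _ _ => Submodule.mem_top) i j
  rwa [Ideal.mul_top, ← pow_mul, ← pow_add, Nat.div_add_mod] at h

theorem pow_sub_pow_apply_mem {I K P : Ideal R} (hIK : I * K ≤ P * K) {s F v : ℕ}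
    {X Y : Matrix ι ι R} (hX : ∀ i j, (X ^ s) i j ∈ I) (hY : ∀ i j, (Y ^ s) i j ∈ I)
    (hXY : ∀ i j, (X - Y) i j ∈ K) (hF : ∀ k < v, F ≤ k / s + (v - 1 - k) / s) (i j : ι) :
    (X ^ v - Y ^ v) i j ∈ P ^ F * K := by
  rw [pow_sub_pow_eq_sum, sum_apply]
  refine Ideal.sum_mem _ fun k hk => ?_
  have hterm := mul_apply_mem_mul (mul_apply_mem_mul (pow_apply_mem_pow_div hY k) hXY)
    (pow_apply_mem_pow_div hX (v - 1 - k)) i j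
  refine (le_trans ?_ (Ideal.mul_mono_left (Ideal.pow_le_pow_right
    (hF k (Finset.mem_range.mp hk))))) hterm
  rw [mul_right_comm, ← pow_add]
  exact Ideal.pow_mul_le_pow_mul hIK _

end Matrix

namespace WittVector

variable (p : ℕ) [Fact p.Prime] (A : Type*) [CommRing A]

local notation "𝕎" => WittVector p

noncomputable def vIdeal (d : ℕ) : Ideal (𝕎 A) :=
  RingHom.ker (truncate d)

variable {p A}

theorem mem_vIdeal {d : ℕ} {x : 𝕎 A} : x ∈ vIdeal p A d ↔ ∀ j < d, x.coeff j = 0 :=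
  mem_ker_truncate d x

theorem verschiebung_mem_vIdeal_succ {d : ℕ} {x : 𝕎 A} (hx : x ∈ vIdeal p A d) :
    verschiebung x ∈ vIdeal p A (d + 1) := by
  rw [mem_vIdeal] at hx ⊢
  rintro (_ | j) hj
  · exact verschiebung_coeff_zero x
  · rw [verschiebung_coeff_succ]
    exact hx j (by omega)

theorem exists_verschiebung_eq_of_mem_vIdeal_succ {d : ℕ} {x : 𝕎 A}
    (hx : x ∈ vIdeal p A (d + 1)) : ∃ y ∈ vIdeal p A d, verschiebung y = x := by
  rw [mem_vIdeal] at hx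
  refine ⟨x.shift 1, mem_vIdeal.mpr fun j hj => ?_, ?_⟩
  · rw [shift_coeff]
    exact hx (1 + j) (by omega)
  · simpa [shift] using verschiebung_shift x 0 fun i hi => hx i (by omega)

variable [CharP A p]

theorem vIdeal_one_mul_le {d : ℕ} (hd : 1 ≤ d) :
    vIdeal p A 1 * vIdeal p A d ≤ Ideal.span {(p : 𝕎 A)} * vIdeal p A d := by
  obtain ⟨e, rfl⟩ := Nat.exists_eq_add_of_le' hd
  refine Ideal.mul_le.mpr fun x hx y hy => ?_
  obtain ⟨a, -, rfl⟩ := exists_verschiebung_eq_of_mem_vIdeal_succ (d := 0) hx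
  obtain ⟨b, hb, rfl⟩ := exists_verschiebung_eq_of_mem_vIdeal_succ hy
  have hprod : verschiebung a * verschiebung b = p * verschiebung (a * b) :=
    calc verschiebung a * verschiebung b = verschiebung (a * frobenius (verschiebung b)) :=
          (verschiebung_mul_frobenius a _).symm
      _ = verschiebung (frobenius (verschiebung (a * b))) := by
          rw [frobenius_verschiebung, frobenius_verschiebung, mul_assoc]
      _ = p * verschiebung (a * b) := by rw [verschiebung_frobenius, mul_comm]
  rw [hprod, Ideal.mem_span_singleton_mul]
  exact ⟨_, verschiebung_mem_vIdeal_succ (Ideal.mul_mem_left _ a hb), rfl⟩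

theorem isUnit_natCast_of_not_dvd {u : ℕ} (hu : ¬ p ∣ u) : IsUnit (u : 𝕎 A) := by
  have hZp : IsUnit (u : ℤ_[p]) := by
    rw [PadicInt.isUnit_iff, PadicInt.norm_natCast_eq_one_iff]
    exact (Nat.Prime.coprime_iff_not_dvd Fact.out).mpr hu
  simpa using hZp.map ((map (ZMod.castHom (dvd_refl p) A)).comp (equiv p).symm.toRingHom)

variable [IsReduced A]

theorem isLeftRegular_natCast_prime : IsLeftRegular (p : 𝕎 A) := by
  refine isLeftRegular_iff_right_eq_zero_of_mul.mpr fun x hx => ext fun j => ?_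
  have h := mul_charP_coeff_succ x j
  rw [mul_comm, hx, zero_coeff] at h
  rw [zero_coeff]
  exact IsNilpotent.eq_zero ⟨p, h.symm⟩

theorem mem_vIdeal_of_natCast_mul_mem {c d : ℕ} (hc : c ≠ 0) {x : 𝕎 A}
    (h : (c : 𝕎 A) * x ∈ Ideal.span {(p : 𝕎 A)} ^ c.factorization p * vIdeal p A d) :
    x ∈ vIdeal p A d := by
  rw [Ideal.span_singleton_pow, Ideal.mem_span_singleton_mul] at h
  obtain ⟨z, hz, hzx⟩ := h
  have hcu : (c : 𝕎 A) = (p : 𝕎 A) ^ c.factorization p * (c / p ^ c.factorization p : ℕ) :=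
    by rw [← Nat.cast_pow, ← Nat.cast_mul, Nat.ordProj_mul_ordCompl_eq_self]
  have hunit := isUnit_natCast_of_not_dvd (A := A) (Nat.not_dvd_ordCompl Fact.out hc)
  rw [hcu, mul_assoc] at hzx
  rw [← Ideal.unit_mul_mem_iff_mem _ hunit, ← (isLeftRegular_natCast_prime.pow _) hzx]
  exact hz

end WittVector

open WittVector

section PartialSums

variable {p : ℕ} [Fact p.Prime] {A : Type*} [CommRing A] {n : ℕ}
  {X : Matrix (Fin n) (Fin n) (WittVector p A)}
  {E : ℕ → Matrix (Fin n) (Fin n) (WittVector p A)}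

theorem IsExpPartialSums.one_eq (hE : IsExpPartialSums p X E) : E 1 = X := by
  simpa using hE 1 le_rfl

theorem IsExpPartialSums.factorial_smul_sub (hE : IsExpPartialSums p X E) {N : ℕ} (hN : 1 ≤ N) :
    (N + 1)! • (E (N + 1) - E N) = X ^ (N + 1) := by
  have hprev : (N + 1)! • E N = ∑ v ∈ Finset.Icc 1 N, ((N + 1)! / v !) • X ^ v := by
    rw [Nat.factorial_succ, mul_smul, hE N hN, Finset.smul_sum]
    refine Finset.sum_congr rfl fun v hv => ?_
    rw [smul_smul, Nat.mul_div_assoc _ (Nat.factorial_dvd_factorial (Finset.mem_Icc.mp hv).2)]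
  rw [smul_sub, hE (N + 1) (by omega), hprev, Finset.sum_Icc_succ_top (by omega),
    Nat.div_self (Nat.factorial_pos _), one_smul, add_sub_cancel_left]

theorem IsLogPartialSums.one_eq (hE : IsLogPartialSums p X E) : E 1 = X := by
  simpa using hE 1 le_rfl

theorem IsLogPartialSums.factorial_smul_sub (hE : IsLogPartialSums p X E) {N : ℕ} (hN : 1 ≤ N) :
    ((N + 1)! : ℤ) • (E (N + 1) - E N) = ((-1) ^ N * (N ! : ℤ)) • X ^ (N + 1) := by
  have hprev : ((N + 1)! : ℤ) • E N =
      ∑ v ∈ Finset.Icc 1 N,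
        ((-1 : ℤ) ^ (v - 1) * (((N + 1)! / v : ℕ) : ℤ)) • X ^ v := by
    rw [Nat.factorial_succ, Nat.cast_mul, mul_smul, hE N hN, Finset.smul_sum]
    refine Finset.sum_congr rfl fun v hv => ?_
    rw [smul_smul, Nat.mul_div_assoc _ (Nat.dvd_factorial (Finset.mem_Icc.mp hv).1
      (Finset.mem_Icc.mp hv).2)]
    push_cast
    ring_nf
  rw [smul_sub, hE (N + 1) (by omega), hprev, Finset.sum_Icc_succ_top (by omega),
    Nat.factorial_succ, Nat.mul_div_cancel_left _ N.succ_pos, Nat.add_sub_cancel,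
    add_sub_cancel_left]

end PartialSums

section VAdic

variable {p : ℕ} [Fact p.Prime] {A : Type*} [CommRing A] {n : ℕ}

theorem entrywiseV_iff_forall_mem_vIdeal {d : ℕ} {M : Matrix (Fin n) (Fin n) (WittVector p A)} :
    EntrywiseV p d M ↔ ∀ i j, M i j ∈ vIdeal p A d :=
  ⟨fun h i j => mem_vIdeal.mpr fun k hk => congrFun (congrFun (h k hk) i) j,
    fun h k hk => Matrix.ext fun i j => mem_vIdeal.mp (h i j) k hk⟩

theorem wittPi_zero_pow (M : Matrix (Fin n) (Fin n) (WittVector p A)) (s : ℕ) :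
    wittPi p 0 (M ^ s) = wittPi p 0 M ^ s :=
  map_pow (RingHom.mapMatrix (constantCoeff : WittVector p A →+* A)) M s

theorem IsSigmaEither.exists_pow_apply_mem_vIdeal_one
    {S : Set (Matrix (Fin n) (Fin n) (WittVector p A))} (hS : IsSigmaEither p S) :
    ∃ s, 0 < s ∧ (s = 1 ∨ 2 * s ≤ p - 1) ∧
      ∀ Z ∈ S, ∀ i j, (Z ^ s) i j ∈ vIdeal p A 1 := by
  have hpow : ∀ {s} {Z : Matrix (Fin n) (Fin n) (WittVector p A)}, wittPi p 0 Z ^ s = 0 →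
      ∀ i j, (Z ^ s) i j ∈ vIdeal p A 1 := fun hZ =>
    entrywiseV_iff_forall_mem_vIdeal.mp fun j hj => by rwa [Nat.lt_one_iff.mp hj, wittPi_zero_pow]
  rcases hS with ⟨s, -, hs, hsp, rfl⟩ | ⟨t, -, rfl⟩
  · exact ⟨s, hs, Or.inr (by omega), fun Z hZ => hpow hZ⟩
  · exact ⟨1, one_pos, Or.inl rfl, fun Z hZ => hpow (by rw [pow_one]; exact hZ.1)⟩

theorem TendstoV.entrywiseV_sub {d : ℕ} {Y Y' : ℕ → Matrix (Fin n) (Fin n) (WittVector p A)}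
    {L L' : Matrix (Fin n) (Fin n) (WittVector p A)} (hY : TendstoV p Y L) (hY' : TendstoV p Y' L')
    (h : ∀ N ≥ 1, EntrywiseV p d (Y N - Y' N)) : EntrywiseV p d (L - L') := by
  obtain ⟨N₀, hN₀⟩ := hY d
  obtain ⟨N₀', hN₀'⟩ := hY' d
  set N := max 1 (max N₀ N₀')
  have hL : L - L' = (Y N - Y' N) - (Y N - L) + (Y' N - L') := by abel
  have h₁ := entrywiseV_iff_forall_mem_vIdeal.mp (h N (le_max_left _ _))
  have h₂ := entrywiseV_iff_forall_mem_vIdeal.mp (hN₀ N (by omega))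
  have h₃ := entrywiseV_iff_forall_mem_vIdeal.mp (hN₀' N (by omega))
  refine entrywiseV_iff_forall_mem_vIdeal.mpr fun i j => ?_
  rw [hL]
  exact Ideal.add_mem _ (Ideal.sub_mem _ (h₁ i j) (h₂ i j)) (h₃ i j)

variable [CharP A p]

theorem pow_sub_pow_apply_mem_span_mul_vIdeal {s m : ℕ} (hs : 0 < s)
    (hsp : s = 1 ∨ 2 * s ≤ p - 1) (hm : 1 ≤ m) {X Y : Matrix (Fin n) (Fin n) (WittVector p A)}
    (hX : ∀ i j, (X ^ s) i j ∈ vIdeal p A 1) (hY : ∀ i j, (Y ^ s) i j ∈ vIdeal p A 1)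
    (hXY : EntrywiseV p m (X - Y)) (v : ℕ) (i j : Fin n) :
    (X ^ v - Y ^ v) i j ∈
      Ideal.span {(p : WittVector p A)} ^ (v !).factorization p * vIdeal p A m :=
  Matrix.pow_sub_pow_apply_mem (vIdeal_one_mul_le hm) hX hY
    (entrywiseV_iff_forall_mem_vIdeal.mp hXY) (fun k hk => by
      simpa [show k + (v - 1 - k) + 1 = v by omega] using
        Nat.factorization_factorial_le_div_add_div hs hsp k (v - 1 - k)) i j

variable [IsReduced A]

theorem entrywiseV_sub_of_factorial_smul_mem {m : ℕ}
    {Y Y' : ℕ → Matrix (Fin n) (Fin n) (WittVector p A)} (h₁ : EntrywiseV p m (Y 1 - Y' 1))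
    (hstep : ∀ N ≥ 1, ∀ i j, ((N + 1)! • ((Y (N + 1) - Y N) - (Y' (N + 1) - Y' N))) i j ∈
      Ideal.span {(p : WittVector p A)} ^ (N + 1)!.factorization p * vIdeal p A m) :
    ∀ N ≥ 1, EntrywiseV p m (Y N - Y' N) := by
  refine Nat.le_induction h₁ fun N hN ih => entrywiseV_iff_forall_mem_vIdeal.mpr fun i j => ?_
  have hsplit : (Y (N + 1) - Y' (N + 1)) i j =
      ((Y (N + 1) - Y N) - (Y' (N + 1) - Y' N)) i j + (Y N - Y' N) i j := by
    simp only [Matrix.sub_apply]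
    ring
  have hnext := hstep N hN i j
  rw [Matrix.smul_apply, nsmul_eq_mul] at hnext
  rw [hsplit]
  exact Ideal.add_mem _ (mem_vIdeal_of_natCast_mul_mem (Nat.factorial_ne_zero _) hnext)
    (entrywiseV_iff_forall_mem_vIdeal.mp ih i j)

end VAdic

theorem exp_log_congruence_general (p : ℕ) [Fact p.Prime] (A : Type*) [CommRing A]
    [CharP A p] [IsReduced A] (n : ℕ)
    (S : Set (Matrix (Fin n) (Fin n) (WittVector p A))) (hS : IsSigmaEither p S)
    (m : ℕ) (hm : 1 ≤ m)
    (X X' : Matrix (Fin n) (Fin n) (WittVector p A)) (hX : X ∈ S) (hX' : X' ∈ S)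
    (hXX' : EntrywiseV p m (X - X')) :
    (∀ Y Y', IsExpLimit p X Y → IsExpLimit p X' Y' → EntrywiseV p m (Y - Y')) ∧
    (∀ Y Y', IsLogLimit p X Y → IsLogLimit p X' Y' → EntrywiseV p m (Y - Y')) := by
  obtain ⟨s, hs, hsp, hpow⟩ := hS.exists_pow_apply_mem_vIdeal_one
  have hpowdiff :=
    pow_sub_pow_apply_mem_span_mul_vIdeal hs hsp hm (hpow X hX) (hpow X' hX') hXX'
  refine ⟨?_, ?_⟩
  · rintro Y Y' ⟨E, hE, hEY⟩ ⟨E', hE', hEY'⟩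
    refine hEY.entrywiseV_sub hEY' (entrywiseV_sub_of_factorial_smul_mem ?_ fun N hN => ?_)
    · rwa [hE.one_eq, hE'.one_eq]
    · rw [smul_sub, hE.factorial_smul_sub hN, hE'.factorial_smul_sub hN]
      exact hpowdiff (N + 1)
  · rintro Y Y' ⟨L, hL, hLY⟩ ⟨L', hL', hLY'⟩
    refine hLY.entrywiseV_sub hLY' (entrywiseV_sub_of_factorial_smul_mem ?_ fun N hN i j => ?_)
    · rwa [hL.one_eq, hL'.one_eq]
    · rw [← natCast_zsmul, smul_sub, hL.factorial_smul_sub hN, hL'.factorial_smul_sub hN,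
        ← smul_sub, Matrix.smul_apply, zsmul_eq_mul]
      exact Ideal.mul_mem_left _ _ (hpowdiff (N + 1) i j)

/-- Proposition B.2 (c), congruence part: if `X, X' ∈ Σ` and `X − X'` lies entrywise in `V^m`,
then `e₁(X) − e₁(X')` and `l₁(X) − l₁(X')` lie entrywise in `V^m`. -/
theorem exp_log_congruence (p : ℕ) [Fact p.Prime] (A : Type*) [CommRing A]
    [CharP A p] [IsReduced A] (n : ℕ) (hn : 1 ≤ n)
    (S : Set (Matrix (Fin n) (Fin n) (WittVector p A))) (hS : IsSigmaEither p S)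
    (m : ℕ) (hm : 1 ≤ m)
    (X X' : Matrix (Fin n) (Fin n) (WittVector p A)) (hX : X ∈ S) (hX' : X' ∈ S)
    (hXX' : EntrywiseV p m (X - X')) :
    (∀ Y Y', IsExpLimit p X Y → IsExpLimit p X' Y' → EntrywiseV p m (Y - Y')) ∧
    (∀ Y Y', IsLogLimit p X Y → IsLogLimit p X' Y' → EntrywiseV p m (Y - Y')) :=
  exp_log_congruence_general p A n S hS m hm X X' hX hX' hXX'
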